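/- Let (M,h) be a 3-dimensional Riemannian manifold, m a unit vector field with projector P_{ab} = h_{ab} − m_a m_b, and suppose the symmetric trace-free (with respect to h) tensors D_{ab} and C_{ab} on (M,h) satisfy the algebraically-special relation D_{ab} − (1/2) D_{ef} m^e m^f (3 m_a m_b − h_{ab}) = m^d ε_{ed(a} ( C_{b)}{}^e + m_{b)} m^f C_f{}^e ), where ε is the volume form of h. Then D_{ab} = (1/2) D_{ef}m^e m^f (3m_a m_b − h_{ab}) if and only if C_{ab} = (1/2) C_{ef}m^e m^f (3m_a m_b − h_{ab}). -/

import Mathlib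

namespace Stmt16

noncomputable section

abbrev Idx := Fin 3
abbrev Vec := Idx → ℝ
abbrev Ten2 := Idx → Idx → ℝ
abbrev Ten3 := Idx → Idx → Idx → ℝ

/-- Raise an index with the inverse metric: `u^a = g^{ab} u_b`. -/
def raise (ginv : Ten2) (u : Vec) : Vec := fun a => ∑ b, ginv a b * u b

/-- Scalar product of two covectors: `g^{ab} u_a v_b`. -/
def dotInv (ginv : Ten2) (u v : Vec) : ℝ := ∑ a, ∑ b, ginv a b * u a * v b

/-- Projector orthogonal to the unit covector `u`: `P_{ab} = g_{ab} - u_a u_b`. -/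
def proj (g : Ten2) (u : Vec) : Ten2 := fun a b => g a b - u a * u b

/-- Raise both indices of a covariant 2-tensor. -/
def raise2 (ginv : Ten2) (T : Ten2) : Ten2 := fun a b =>
  ∑ c, ∑ d, ginv a c * ginv b d * T c d

/-- Symmetrized product `X_{(b} Y_{c)}` of two covectors. -/
def sympair (u v : Vec) : Ten2 := fun b c => (u b * v c + u c * v b) / 2

/-- The tensor `s_{abc} = 2Σ₁ m_a m̂_{(b}ḿ_{c)} + 2Σ₂ ḿ_a m̂_{(b}m_{c)}
+ 2Σ₃ m̂_a m_{(b}ḿ_{c)}`. -/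
def sForm (S1 S2 S3 : ℝ) (m m' m'' : Vec) : Ten3 := fun a b c =>
  2 * S1 * m a * sympair m'' m' b c
    + 2 * S2 * m' a * sympair m'' m b c
    + 2 * S3 * m'' a * sympair m m' b c

/-- The 'Coulombic' tensor `(1/2) T(m,m) (3 m_a m_b − h_{ab})` associated to a
symmetric trace-free tensor `T` and the unit covector `m`. -/
def coulomb (g ginv : Ten2) (m : Vec) (T : Ten2) : Ten2 := fun a b =>
  (1/2) * (∑ p, ∑ q, raise ginv m p * raise ginv m q * T p q)
    * (3 * m a * m b - g a b)

/-- Mixed components `T_b{}^e = g^{ee'} T_{be'}`. -/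
def mix (ginv : Ten2) (T : Ten2) : Ten2 := fun b e => ∑ e', ginv e e' * T b e'

/-- The (unsymmetrized) right-hand side
`X_{ab} = m^d ε_{eda} ( C_b{}^e + m_b m^f C_f{}^e )` of the algebraically
special relation. -/
def rhsX (ginv : Ten2) (eps : Ten3) (m : Vec) (C : Ten2) : Ten2 := fun a b =>
  ∑ d, ∑ e, raise ginv m d * eps e d a *
    (mix ginv C b e + m b * ∑ f, raise ginv m f * mix ginv C f e)

/-! ### Auxiliary machinery -/

/-- The Levi-Civita symbol on `Fin 3`, as a real number. -/
def lev (a b c : Idx) : ℝ :=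
  (((b:ℕ):ℝ) - ((a:ℕ):ℝ)) * ((((c:ℕ)):ℝ) - ((b:ℕ):ℝ)) * (((c:ℕ):ℝ) - ((a:ℕ):ℝ)) / 2

lemma idx_cases : ∀ i : Idx, i = 0 ∨ i = 1 ∨ i = 2 := by decide

set_option maxHeartbeats 4000000 in
/-- `det g · ε̂_{abc} ε̂_{def} = det of the (abc)×(def) Gram submatrix`. -/
lemma lev_det (g : Ten2) (a b c d e f : Idx) :
    (g 0 0 * g 1 1 * g 2 2 - g 0 0 * g 1 2 * g 2 1 - g 0 1 * g 1 0 * g 2 2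
      + g 0 1 * g 1 2 * g 2 0 + g 0 2 * g 1 0 * g 2 1 - g 0 2 * g 1 1 * g 2 0)
      * lev a b c * lev d e f
      = g a d * (g b e * g c f - g b f * g c e)
        - g a e * (g b d * g c f - g b f * g c d)
        + g a f * (g b d * g c e - g b e * g c d) := by
  rcases idx_cases a with rfl|rfl|rfl <;> rcases idx_cases b with rfl|rfl|rfl <;>
    rcases idx_cases c with rfl|rfl|rfl <;> rcases idx_cases d with rfl|rfl|rfl <;>
    rcases idx_cases e with rfl|rfl|rfl <;> rcases idx_cases f with rfl|rfl|rfl <;>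
    norm_num [lev] <;> ring
set_option maxHeartbeats 4000000 in
/-- If the symmetric trace-free tensors `D` and `C` on a
3-dimensional oriented Riemannian space satisfy the algebraically special
relation `D_{ab} − (1/2) D(m,m)(3 m_a m_b − h_{ab}) = m^d ε_{ed(a}(C_{b)}{}^e +
m_{b)} m^f C_f{}^e)`, then `D` is Coulombic w.r.t. `m` iff `C` is. -/
theorem algebraically_special_coulomb_iff
    (g ginv : Ten2)
    (gsym : ∀ a b, g a b = g b a)
    (ginvsym : ∀ a b, ginv a b = ginv b a)
    (ginverse : ∀ a b, (∑ c, g a c * ginv c b) = if a = b then 1 else 0)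
    (gposdef : ∀ v : Vec, v ≠ 0 → 0 < ∑ a, ∑ b, g a b * v a * v b)
    -- the volume form of `g`
    (eps : Ten3)
    (heps1 : ∀ a b c, eps a b c = - eps b a c)
    (heps2 : ∀ a b c, eps a b c = - eps a c b)
    (heps3 : eps 0 1 2 = Real.sqrt (Matrix.det (Matrix.of g)))
    (m : Vec) (hunit : dotInv ginv m m = 1)
    (D C : Ten2)
    (hDsym : ∀ a b, D a b = D b a) (hCsym : ∀ a b, C a b = C b a)
    (hDtf : (∑ a, ∑ b, ginv a b * D a b) = 0)
    (hCtf : (∑ a, ∑ b, ginv a b * C a b) = 0)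
    -- the algebraically special relation
    (hrel : ∀ a b, D a b - coulomb g ginv m D a b
        = (rhsX ginv eps m C a b + rhsX ginv eps m C b a) / 2) :
    (∀ a b, D a b = coulomb g ginv m D a b)
      ↔ (∀ a b, C a b = coulomb g ginv m C a b) := by
  -- basic abbreviations
  set u : Vec := raise ginv m with hu
  set vv : Vec := (fun b => ∑ e, u e * C b e) with hvv
  set kap : ℝ := (∑ p, ∑ q, u p * u q * C p q) with hkap
  set TT : Ten2 := (fun b e => mix ginv C b e + m b * ∑ f, u f * mix ginv C f e) with hTT
  -- inverse-metric delta relations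
  have hδ2 : ∀ a b, (∑ c, ginv a c * g c b) = if a = b then 1 else 0 := by
    intro a b
    have h1 : (∑ c, ginv a c * g c b) = ∑ c, g b c * ginv c a :=
      Finset.sum_congr rfl fun c _ => by rw [ginvsym a c, gsym c b]; ring
    rw [h1, ginverse b a]
    by_cases h : a = b <;> simp [h, eq_comm]
  -- metric contractions with u
  have hgu : ∀ e, (∑ d, g e d * u d) = m e := by
    intro e
    calc (∑ d, g e d * u d) = ∑ b, (∑ d, g e d * ginv d b) * m b := by
          simp only [hu, raise, Fin.sum_univ_three]; ring
      _ = ∑ b, (if e = b then 1 else 0) * m b :=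
          Finset.sum_congr rfl fun b _ => by rw [ginverse e b]
      _ = m e := by simp
  have hug : ∀ e, (∑ d, u d * g d e) = m e := by
    intro e
    calc (∑ d, u d * g d e) = ∑ d, g e d * u d :=
          Finset.sum_congr rfl fun d _ => by rw [gsym d e]; ring
      _ = m e := hgu e
  have hug2 : ∀ e, (∑ d, u d * g e d) = m e := by
    intro e
    calc (∑ d, u d * g e d) = ∑ d, u d * g d e :=
          Finset.sum_congr rfl fun d _ => by rw [gsym e d]
      _ = m e := hug e
  have hmu : (∑ d, u d * m d) = 1 := by
    have h1 : (∑ d, u d * m d) = dotInv ginv m m := by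
      simp only [hu, raise, dotInv, Fin.sum_univ_three]; ring
    rw [h1, hunit]
  have huC : ∀ f, (∑ a, u a * C a f) = vv f := by
    intro f
    calc (∑ a, u a * C a f) = ∑ a, u a * C f a :=
          Finset.sum_congr rfl fun a _ => by rw [hCsym a f]
      _ = vv f := by rw [hvv]
  have huv : (∑ f, u f * vv f) = kap := by
    simp only [hvv, hkap, Fin.sum_univ_three]; ring
  -- collapses involving `mix`
  have hmixlow : ∀ b f, (∑ e, g e f * mix ginv C b e) = C b f := by
    intro b f
    have h1 : ∀ e', (∑ e, g e f * ginv e e') = if f = e' then 1 else 0 := by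
      intro e'
      have h2 : (∑ e, g e f * ginv e e') = ∑ e, g f e * ginv e e' :=
        Finset.sum_congr rfl fun e _ => by rw [gsym e f]
      rw [h2, ginverse f e']
    calc (∑ e, g e f * mix ginv C b e)
        = ∑ e', (∑ e, g e f * ginv e e') * C b e' := by
          simp only [mix, Fin.sum_univ_three]; ring
      _ = ∑ e', (if f = e' then 1 else 0) * C b e' :=
          Finset.sum_congr rfl fun e' _ => by rw [h1 e']
      _ = C b f := by simp
  have hmixm : ∀ b, (∑ e, m e * mix ginv C b e) = vv b := by
    intro b
    have h1 : ∀ e', (∑ e, m e * ginv e e') = u e' := by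
      intro e'
      have h2 : (∑ e, m e * ginv e e') = ∑ e, ginv e' e * m e :=
        Finset.sum_congr rfl fun e _ => by rw [ginvsym e e']; ring
      rw [h2, hu]; rfl
    calc (∑ e, m e * mix ginv C b e)
        = ∑ e', (∑ e, m e * ginv e e') * C b e' := by
          simp only [mix, Fin.sum_univ_three]; ring
      _ = ∑ e', u e' * C b e' := Finset.sum_congr rfl fun e' _ => by rw [h1 e']
      _ = vv b := by rw [hvv]
  -- T-tensor contractions
  have hTlow : ∀ b f, (∑ e, g e f * TT b e) = C b f + m b * vv f := by
    intro b f
    have h1 : (∑ f', u f' * (∑ e, g e f * mix ginv C f' e)) = ∑ f', u f' * C f' f :=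
      Finset.sum_congr rfl fun f' _ => by rw [hmixlow f' f]
    calc (∑ e, g e f * TT b e)
        = (∑ e, g e f * mix ginv C b e)
            + m b * ∑ f', u f' * (∑ e, g e f * mix ginv C f' e) := by
          simp only [hTT, Fin.sum_univ_three]; ring
      _ = C b f + m b * vv f := by rw [hmixlow b f, h1, huC f]
  have hTm : ∀ b, (∑ e, m e * TT b e) = vv b + m b * kap := by
    intro b
    have h1 : (∑ f', u f' * (∑ e, m e * mix ginv C f' e)) = ∑ f', u f' * vv f' :=
      Finset.sum_congr rfl fun f' _ => by rw [hmixm f']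
    calc (∑ e, m e * TT b e)
        = (∑ e, m e * mix ginv C b e)
            + m b * ∑ f', u f' * (∑ e, m e * mix ginv C f' e) := by
          simp only [hTT, Fin.sum_univ_three]; ring
      _ = vv b + m b * kap := by rw [hmixm b, h1, huv]
  have hTulow : ∀ f, (∑ a, u a * (∑ e, g e f * TT a e)) = 2 * vv f := by
    intro f
    calc (∑ a, u a * (∑ e, g e f * TT a e)) = ∑ a, u a * (C a f + m a * vv f) :=
          Finset.sum_congr rfl fun a _ => by rw [hTlow a f]
      _ = (∑ a, u a * C a f) + (∑ a, u a * m a) * vv f := by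
          simp only [Fin.sum_univ_three]; ring
      _ = 2 * vv f := by rw [huC f, hmu]; ring
  have hTum : (∑ a, u a * (∑ e, m e * TT a e)) = 2 * kap := by
    calc (∑ a, u a * (∑ e, m e * TT a e)) = ∑ a, u a * (vv a + m a * kap) :=
          Finset.sum_congr rfl fun a _ => by rw [hTm a]
      _ = (∑ a, u a * vv a) + (∑ a, u a * m a) * kap := by
          simp only [Fin.sum_univ_three]; ring
      _ = 2 * kap := by rw [huv, hmu]; ring
  have hTtr : (∑ a, TT a a) = kap := by
    have h1 : (∑ a, mix ginv C a a) = 0 := by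
      have : (∑ a, mix ginv C a a) = ∑ a, ∑ b, ginv a b * C a b := by
        simp only [mix, Fin.sum_univ_three]
      rw [this, hCtf]
    have h2 : ∀ f', (∑ a, m a * mix ginv C f' a) = vv f' := by
      intro f'
      have h3 : ∀ e', (∑ a, m a * ginv a e') = u e' := by
        intro e'
        have h4 : (∑ a, m a * ginv a e') = ∑ a, ginv e' a * m a :=
          Finset.sum_congr rfl fun a _ => by rw [ginvsym a e']; ring
        rw [h4, hu]; rfl
      calc (∑ a, m a * mix ginv C f' a)
          = ∑ e', (∑ a, m a * ginv a e') * C f' e' := by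
            simp only [mix, Fin.sum_univ_three]; ring
        _ = ∑ e', u e' * C f' e' := Finset.sum_congr rfl fun e' _ => by rw [h3 e']
        _ = vv f' := by rw [hvv]
    calc (∑ a, TT a a)
        = (∑ a, mix ginv C a a) + ∑ f', u f' * (∑ a, m a * mix ginv C f' a) := by
          simp only [hTT, Fin.sum_univ_three]; ring
      _ = 0 + ∑ f', u f' * vv f' := by
          rw [h1]; exact congrArg _ (Finset.sum_congr rfl fun f' _ => by rw [h2 f'])
      _ = kap := by rw [huv]; ring
  -- epsilon machinery
  set s : ℝ := eps 0 1 2 with hs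
  have hdetpos : 0 < Matrix.det (Matrix.of g) := by
    have hherm : (Matrix.of g).IsHermitian := by
      ext a b
      simp only [Matrix.conjTranspose_apply, Matrix.of_apply, star_trivial]
      exact gsym b a
    have hpd : (Matrix.of g).PosDef := by
      refine Matrix.PosDef.of_dotProduct_mulVec_pos hherm fun x hx => ?_
      have h1 : dotProduct (star x) (Matrix.mulVec (Matrix.of g) x)
          = ∑ a, ∑ b, g a b * x a * x b := by
        simp only [dotProduct, Matrix.mulVec, Matrix.of_apply, star_trivial,
          Pi.star_apply, Fin.sum_univ_three]
        ring
      rw [h1]; exact gposdef x hx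
    exact hpd.det_pos
  have hs2 : s * s
      = g 0 0 * g 1 1 * g 2 2 - g 0 0 * g 1 2 * g 2 1 - g 0 1 * g 1 0 * g 2 2
        + g 0 1 * g 1 2 * g 2 0 + g 0 2 * g 1 0 * g 2 1 - g 0 2 * g 1 1 * g 2 0 := by
    have h1 : s * s = Matrix.det (Matrix.of g) := by
      rw [heps3]; exact Real.mul_self_sqrt hdetpos.le
    rw [h1, Matrix.det_fin_three]
    simp only [Matrix.of_apply]
  have hz1 : ∀ a c, eps a a c = 0 := fun a c => by have := heps1 a a c; linarith
  have hz2 : ∀ a b, eps a b b = 0 := fun a b => by have := heps2 a b b; linarith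
  have hz3 : ∀ a b, eps a b a = 0 := fun a b => by
    rw [heps1 a b a, hz2 b a]; ring
  have h021 : eps 0 2 1 = -s := by rw [heps2 0 2 1, ← hs]
  have h102 : eps 1 0 2 = -s := by rw [heps1 1 0 2, ← hs]
  have h120 : eps 1 2 0 = s := by rw [heps2 1 2 0, h102]; ring
  have h201 : eps 2 0 1 = s := by rw [heps1 2 0 1, h021]; ring
  have h210 : eps 2 1 0 = -s := by rw [heps2 2 1 0, h201]
  have hepsc : ∀ a b c, eps a b c = s * lev a b c := by
    intro a b c
    rcases idx_cases a with rfl|rfl|rfl <;> rcases idx_cases b with rfl|rfl|rfl <;>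
      rcases idx_cases c with rfl|rfl|rfl <;>
      norm_num [lev, hz1, hz2, hz3, h021, h102, h120, h201, h210, ← hs]
  -- the epsilon-epsilon identity
  have hee : ∀ a b c d e f, eps a b c * eps d e f
      = g a d * (g b e * g c f - g b f * g c e)
        - g a e * (g b d * g c f - g b f * g c d)
        + g a f * (g b d * g c e - g b e * g c d) := by
    intro a b c d e f
    rw [hepsc a b c, hepsc d e f]
    linear_combination (lev a b c * lev d e f) * hs2 + lev_det g a b c d e f
  -- contracted epsilon-epsilon identity
  have hQ : ∀ p q, (∑ a, ∑ a', ginv a a' * g p a' * g a q) = g p q := by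
    intro p q
    have h1 : ∀ a, (∑ a', ginv a a' * g p a') = if a = p then 1 else 0 := by
      intro a
      have h2 : (∑ a', ginv a a' * g p a') = ∑ a', ginv a a' * g a' p :=
        Finset.sum_congr rfl fun a' _ => by rw [gsym p a']
      rw [h2, hδ2 a p]
    calc (∑ a, ∑ a', ginv a a' * g p a' * g a q)
        = ∑ a, (∑ a', ginv a a' * g p a') * g a q := by
          simp only [Fin.sum_univ_three]; ring
      _ = ∑ a, (if a = p then 1 else 0) * g a q :=
          Finset.sum_congr rfl fun a _ => by rw [h1 a]
      _ = g p q := by simp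
  have hS3 : (∑ a, ∑ a', ginv a a' * g a a') = 3 := by
    have h1 : ∀ a, (∑ a', ginv a a' * g a a') = 1 := by
      intro a
      have h2 : (∑ a', ginv a a' * g a a') = ∑ a', ginv a a' * g a' a :=
        Finset.sum_congr rfl fun a' _ => by rw [gsym a a']
      rw [h2, hδ2 a a]; simp
    calc (∑ a, ∑ a', ginv a a' * g a a') = ∑ a : Idx, (1:ℝ) :=
          Finset.sum_congr rfl fun a _ => h1 a
      _ = 3 := by simp
  have hcontr : ∀ e d f d', (∑ a, ∑ a', ginv a a' * (eps e d a * eps f d' a'))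
      = g e f * g d d' - g e d' * g d f := by
    intro e d f d'
    calc (∑ a, ∑ a', ginv a a' * (eps e d a * eps f d' a'))
        = ∑ a, ∑ a', ginv a a' *
            (g e f * (g d d' * g a a' - g d a' * g a d')
              - g e d' * (g d f * g a a' - g d a' * g a f)
              + g e a' * (g d f * g a d' - g d d' * g a f)) :=
          Finset.sum_congr rfl fun a _ => Finset.sum_congr rfl fun a' _ => by
            rw [hee e d a f d' a']
      _ = g e f * g d d' * (∑ a, ∑ a', ginv a a' * g a a')
            - g e f * (∑ a, ∑ a', ginv a a' * g d a' * g a d')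
            - g e d' * g d f * (∑ a, ∑ a', ginv a a' * g a a')
            + g e d' * (∑ a, ∑ a', ginv a a' * g d a' * g a f)
            + g d f * (∑ a, ∑ a', ginv a a' * g e a' * g a d')
            - g d d' * (∑ a, ∑ a', ginv a a' * g e a' * g a f) := by
          simp only [Fin.sum_univ_three]; ring
      _ = g e f * g d d' - g e d' * g d f := by
          rw [hS3, hQ d d', hQ d f, hQ e d', hQ e f]; ring
  -- generic delta collapse with g/ginv pair
  have hcolW : ∀ (p : Idx) (W : Idx → ℝ), (∑ a, ∑ a', ginv a a' * g p a' * W a) = W p := by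
    intro p W
    have h1 : ∀ a, (∑ a', ginv a a' * g p a') = if a = p then 1 else 0 := by
      intro a
      have h2 : (∑ a', ginv a a' * g p a') = ∑ a', ginv a a' * g a' p :=
        Finset.sum_congr rfl fun a' _ => by rw [gsym p a']
      rw [h2, hδ2 a p]
    calc (∑ a, ∑ a', ginv a a' * g p a' * W a)
        = ∑ a, (∑ a', ginv a a' * g p a') * W a := by
          simp only [Fin.sum_univ_three]; ring
      _ = ∑ a, (if a = p then 1 else 0) * W a :=
          Finset.sum_congr rfl fun a _ => by rw [h1 a]
      _ = W p := by simp
  -- coulomb in terms of kap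
  have hcoul : ∀ a b, coulomb g ginv m C a b = 1/2 * kap * (3 * m a * m b - g a b) := by
    intro a b
    simp only [coulomb, ← hu, ← hkap]
  -- rhsX in terms of TT
  have hXT : ∀ a b, rhsX ginv eps m C a b = ∑ d, ∑ e, u d * eps e d a * TT b e := by
    intro a b
    simp only [rhsX, hTT, hu]
  have hDD : (∑ d, ∑ d', u d * u d' * g d d') = 1 := by
    calc (∑ d, ∑ d', u d * u d' * g d d') = ∑ d, u d * (∑ d', g d d' * u d') := by
          simp only [Fin.sum_univ_three]; ring
      _ = ∑ d, u d * m d := Finset.sum_congr rfl fun d _ => by rw [hgu d]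
      _ = 1 := hmu
  have hmTT : ∀ a, (∑ e, (∑ d', u d' * g e d') * TT a e) = ∑ e, m e * TT a e :=
    fun a => Finset.sum_congr rfl fun e _ => by rw [hug2 e]
  -- the two contracted pieces of the hypothesis
  have hK1 : ∀ b f, (∑ a, ∑ a', ∑ d', ginv a a' * (u d' * eps f d' a') * rhsX ginv eps m C a b)
      = (C b f + m b * vv f) - (vv b + m b * kap) * m f := by
    intro b f
    calc (∑ a, ∑ a', ∑ d', ginv a a' * (u d' * eps f d' a') * rhsX ginv eps m C a b)
        = ∑ e, ∑ d, ∑ d', (u d * u d' * TT b e)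
            * (∑ a, ∑ a', ginv a a' * (eps e d a * eps f d' a')) := by
          simp only [hXT, Fin.sum_univ_three]; ring
      _ = ∑ e, ∑ d, ∑ d', (u d * u d' * TT b e) * (g e f * g d d' - g e d' * g d f) :=
          Finset.sum_congr rfl fun e _ => Finset.sum_congr rfl fun d _ =>
            Finset.sum_congr rfl fun d' _ => by rw [hcontr e d f d']
      _ = (∑ e, g e f * TT b e) * (∑ d, ∑ d', u d * u d' * g d d')
            - (∑ e, (∑ d', u d' * g e d') * TT b e) * (∑ d, u d * g d f) := by
          simp only [Fin.sum_univ_three]; ring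
      _ = (∑ e, g e f * TT b e) * 1 - (∑ e, m e * TT b e) * m f := by
          rw [hDD, hmTT b, hug f]
      _ = (C b f + m b * vv f) - (vv b + m b * kap) * m f := by
          rw [hTlow b f, hTm b]; ring
  have hK2 : ∀ b f, (∑ a, ∑ a', ∑ d', ginv a a' * (u d' * eps f d' a') * rhsX ginv eps m C b a)
      = C b f - m b * vv f - m f * vv b + kap * g b f := by
    intro b f
    have hEA : (∑ a, ∑ a', ginv a a' * (∑ e, g e a' * TT a e)) = kap := by
      have h1 : ∀ a e, (∑ a', ginv a a' * g e a') = if a = e then 1 else 0 := by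
        intro a e
        have h2 : (∑ a', ginv a a' * g e a') = ∑ a', ginv a a' * g a' e :=
          Finset.sum_congr rfl fun a' _ => by rw [gsym e a']
        rw [h2, hδ2 a e]
      calc (∑ a, ∑ a', ginv a a' * (∑ e, g e a' * TT a e))
          = ∑ a, ∑ e, (∑ a', ginv a a' * g e a') * TT a e := by
            simp only [Fin.sum_univ_three]; ring
        _ = ∑ a, ∑ e, (if a = e then 1 else 0) * TT a e :=
            Finset.sum_congr rfl fun a _ => Finset.sum_congr rfl fun e _ => by rw [h1 a e]
        _ = ∑ a, TT a a := by simp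
        _ = kap := hTtr
    calc (∑ a, ∑ a', ∑ d', ginv a a' * (u d' * eps f d' a') * rhsX ginv eps m C b a)
        = ∑ a, ∑ a', ∑ d, ∑ d', ∑ e,
            (ginv a a' * u d * u d' * TT a e) * (eps e d b * eps f d' a') := by
          simp only [hXT, Fin.sum_univ_three]; ring
      _ = ∑ a, ∑ a', ∑ d, ∑ d', ∑ e, (ginv a a' * u d * u d' * TT a e) *
            (g e f * (g d d' * g b a' - g d a' * g b d')
              - g e d' * (g d f * g b a' - g d a' * g b f)
              + g e a' * (g d f * g b d' - g d d' * g b f)) :=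
          Finset.sum_congr rfl fun a _ => Finset.sum_congr rfl fun a' _ =>
            Finset.sum_congr rfl fun d _ => Finset.sum_congr rfl fun d' _ =>
              Finset.sum_congr rfl fun e _ => by rw [hee e d b f d' a']
      _ = (∑ a, ∑ a', ginv a a' * g b a' * (∑ e, g e f * TT a e))
              * (∑ d, ∑ d', u d * u d' * g d d')
            - (∑ d', u d' * g b d')
              * (∑ d, u d * (∑ a, ∑ a', ginv a a' * g d a' * (∑ e, g e f * TT a e)))
            - (∑ d, u d * g d f)
              * (∑ a, ∑ a', ginv a a' * g b a' * (∑ e, (∑ d', u d' * g e d') * TT a e))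
            + (∑ d, u d * (∑ a, ∑ a', ginv a a' * g d a'
                * (∑ e, (∑ d', u d' * g e d') * TT a e))) * g b f
            + (∑ d, u d * g d f) * (∑ d', u d' * g b d')
              * (∑ a, ∑ a', ginv a a' * (∑ e, g e a' * TT a e))
            - (∑ d, ∑ d', u d * u d' * g d d')
              * (∑ a, ∑ a', ginv a a' * (∑ e, g e a' * TT a e)) * g b f := by
          simp only [Fin.sum_univ_three]; ring
      _ = (∑ e, g e f * TT b e) * 1
            - m b * (∑ d, u d * (∑ e, g e f * TT d e))
            - m f * (∑ e, (∑ d', u d' * g e d') * TT b e)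
            + (∑ d, u d * (∑ e, (∑ d', u d' * g e d') * TT d e)) * g b f
            + m f * m b * kap
            - 1 * kap * g b f := by
          rw [hDD, hEA, hug2 b, hug f,
            hcolW b (fun a => ∑ e, g e f * TT a e),
            hcolW b (fun a => ∑ e, (∑ d', u d' * g e d') * TT a e)]
          have h3 : (∑ d, u d * (∑ a, ∑ a', ginv a a' * g d a' * (∑ e, g e f * TT a e)))
              = ∑ d, u d * (∑ e, g e f * TT d e) :=
            Finset.sum_congr rfl fun d _ => by
              rw [hcolW d (fun a => ∑ e, g e f * TT a e)]
          have h4 : (∑ d, u d * (∑ a, ∑ a', ginv a a' * g d a'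
                * (∑ e, (∑ d', u d' * g e d') * TT a e)))
              = ∑ d, u d * (∑ e, (∑ d', u d' * g e d') * TT d e) :=
            Finset.sum_congr rfl fun d _ => by
              rw [hcolW d (fun a => ∑ e, (∑ d', u d' * g e d') * TT a e)]
          rw [h3, h4]
      _ = C b f - m b * vv f - m f * vv b + kap * g b f := by
          have h5 : (∑ d, u d * (∑ e, (∑ d', u d' * g e d') * TT d e))
              = ∑ d, u d * (∑ e, m e * TT d e) :=
            Finset.sum_congr rfl fun d _ => by rw [hmTT d]
          rw [hmTT b, h5, hTlow b f, hTm b, hTulow f, hTum]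
          ring
  constructor
  · -- D Coulombic → C Coulombic
    intro hD
    have H : ∀ a b, rhsX ginv eps m C a b + rhsX ginv eps m C b a = 0 := by
      intro a b
      have h1 := hrel a b
      rw [← hD a b] at h1
      linarith
    have hstar : ∀ b f, 2 * C b f - 2 * m f * vv b - kap * m b * m f + kap * g b f = 0 := by
      intro b f
      have h0 : (∑ a, ∑ a', ∑ d', ginv a a' * (u d' * eps f d' a')
          * (rhsX ginv eps m C a b + rhsX ginv eps m C b a)) = 0 := by
        calc (∑ a, ∑ a', ∑ d', ginv a a' * (u d' * eps f d' a')
            * (rhsX ginv eps m C a b + rhsX ginv eps m C b a))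
            = ∑ a, ∑ a', ∑ d', ginv a a' * (u d' * eps f d' a') * 0 :=
              Finset.sum_congr rfl fun a _ => Finset.sum_congr rfl fun a' _ =>
                Finset.sum_congr rfl fun d' _ => by rw [H a b]
          _ = 0 := by simp
      have hsplit : (∑ a, ∑ a', ∑ d', ginv a a' * (u d' * eps f d' a')
          * (rhsX ginv eps m C a b + rhsX ginv eps m C b a))
          = (∑ a, ∑ a', ∑ d', ginv a a' * (u d' * eps f d' a') * rhsX ginv eps m C a b)
            + (∑ a, ∑ a', ∑ d', ginv a a' * (u d' * eps f d' a') * rhsX ginv eps m C b a) := by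
        simp only [Fin.sum_univ_three]; ring
      rw [hsplit, hK1 b f, hK2 b f] at h0
      linear_combination h0
    have hprop : ∀ b f, m f * vv b = m b * vv f := by
      intro b f
      have h1 := hstar b f
      have h2 := hstar f b
      have h3 := hCsym b f
      have h4 := gsym b f
      linear_combination (-(1:ℝ)/2) * h1 + (1/2) * h2 + h3 + (kap/2) * h4
    obtain ⟨i, hi⟩ : ∃ i : Idx, m i ≠ 0 := by
      by_contra hno
      push_neg at hno
      rw [Fin.sum_univ_three, hno 0, hno 1, hno 2] at hmu
      norm_num at hmu
    have hlam : ∀ b, vv b * m i = vv i * m b := fun b => by linear_combination hprop b i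
    have hk2 : kap * m i = vv i := by
      have h1 : (∑ f, u f * (vv f * m i)) = ∑ f, u f * (vv i * m f) :=
        Finset.sum_congr rfl fun f _ => by rw [hlam f]
      have h2 : (∑ f, u f * (vv f * m i)) = kap * m i := by
        rw [← huv]; simp only [Fin.sum_univ_three]; ring
      have h3 : (∑ f, u f * (vv i * m f)) = vv i := by
        rw [show (∑ f, u f * (vv i * m f)) = vv i * ∑ f, u f * m f from by
          simp only [Fin.sum_univ_three]; ring, hmu]
        ring
      rw [h2, h3] at h1
      exact h1
    have hvk : ∀ b, vv b = kap * m b := by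
      intro b
      have h5 := hlam b
      rw [← hk2] at h5
      apply mul_right_cancel₀ hi
      linear_combination h5
    intro a b
    rw [hcoul a b]
    have h1 := hstar a b
    rw [hvk a] at h1
    linear_combination (1/2) * h1
  · -- C Coulombic → D Coulombic
    intro hC
    have hmixC : ∀ b e, mix ginv C b e
        = kap/2 * (3 * m b * u e - (if e = b then 1 else 0)) := by
      intro b e
      have hB : (∑ e', ginv e e' * m e') = u e := by rw [hu]; rfl
      have hCC : (∑ e', ginv e e' * g b e') = if e = b then 1 else 0 := by
        rw [show (∑ e', ginv e e' * g b e') = ∑ e', ginv e e' * g e' b from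
          Finset.sum_congr rfl fun e' _ => by rw [gsym b e'], hδ2 e b]
      calc mix ginv C b e
          = ∑ e', ginv e e' * (1/2 * kap * (3 * m b * m e' - g b e')) :=
            Finset.sum_congr rfl fun e' _ => by rw [hC b e', hcoul b e']
        _ = 3 * (kap/2) * m b * (∑ e', ginv e e' * m e')
            - kap/2 * (∑ e', ginv e e' * g b e') := by
            simp only [Fin.sum_univ_three]; ring
        _ = kap/2 * (3 * m b * u e - (if e = b then 1 else 0)) := by
            rw [hB, hCC]; ring
    have hinner : ∀ b e, TT b e
        = kap/2 * (3 * m b * u e - (if e = b then 1 else 0)) + kap * m b * u e := by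
      intro b e
      have h1 : (∑ f, u f * mix ginv C f e) = kap * u e := by
        have h2 : (∑ f, u f * (if e = f then 1 else 0)) = u e := by simp
        calc (∑ f, u f * mix ginv C f e)
            = ∑ f, u f * (kap/2 * (3 * m f * u e - (if e = f then 1 else 0))) :=
              Finset.sum_congr rfl fun f _ => by rw [hmixC f e]
          _ = 3 * (kap/2) * u e * (∑ f, u f * m f)
              - kap/2 * (∑ f, u f * (if e = f then 1 else 0)) := by
              simp only [Fin.sum_univ_three]; ring
          _ = kap * u e := by rw [hmu, h2]; ring
      simp only [hTT]
      rw [hmixC b e, h1]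
      ring
    have hSasym : ∀ a, (∑ d, ∑ e, u d * u e * eps e d a) = 0 := by
      intro a
      have h1 : (∑ d, ∑ e, u d * u e * eps e d a) = ∑ d, ∑ e, u e * u d * eps d e a :=
        Finset.sum_comm
      have h2 : (∑ d, ∑ e, u e * u d * eps d e a) = ∑ d, ∑ e, -(u d * u e * eps e d a) :=
        Finset.sum_congr rfl fun d _ => Finset.sum_congr rfl fun e _ => by
          rw [heps1 d e a]; ring
      have h3 : (∑ d, ∑ e, -(u d * u e * eps e d a))
          = -(∑ d, ∑ e, u d * u e * eps e d a) := by
        simp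
      have h4 := h1.trans (h2.trans h3)
      linarith
    have hXC : ∀ a b, rhsX ginv eps m C a b = -(kap/2) * (∑ d, u d * eps b d a) := by
      intro a b
      calc rhsX ginv eps m C a b = ∑ d, ∑ e, u d * eps e d a * TT b e := hXT a b
        _ = ∑ d, ∑ e, u d * eps e d a *
            (kap/2 * (3 * m b * u e - (if e = b then 1 else 0)) + kap * m b * u e) :=
            Finset.sum_congr rfl fun d _ => Finset.sum_congr rfl fun e _ => by
              rw [hinner b e]
        _ = (5*kap/2) * m b * (∑ d, ∑ e, u d * u e * eps e d a)
            - kap/2 * (∑ d, u d * (∑ e, (if e = b then 1 else 0) * eps e d a)) := by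
            simp only [Fin.sum_univ_three]; ring
        _ = -(kap/2) * (∑ d, u d * eps b d a) := by
            have h1 : (∑ d, u d * (∑ e, (if e = b then 1 else 0) * eps e d a))
                = ∑ d, u d * eps b d a :=
              Finset.sum_congr rfl fun d _ => by
                rw [show (∑ e, (if e = b then 1 else 0) * eps e d a) = eps b d a from by simp]
            rw [hSasym a, h1]
            ring
    have hflip : ∀ a b d, eps a d b = - eps b d a := by
      intro a b d
      rw [heps1 a d b, heps2 d a b, heps1 d b a]
      ring
    intro a b
    have h1 := hrel a b
    have h2 : rhsX ginv eps m C a b + rhsX ginv eps m C b a = 0 := by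
      rw [hXC a b, hXC b a]
      have h3 : (∑ d, u d * eps a d b) = -(∑ d, u d * eps b d a) := by
        rw [show (∑ d, u d * eps a d b) = ∑ d, -(u d * eps b d a) from
          Finset.sum_congr rfl fun d _ => by rw [hflip a b d]; ring]
        simp
      rw [h3]; ring
    rw [h2] at h1
    linarith

end
end Stmt16
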